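/- arXiv:0912.1443 — 2 statements merged into one kernel-verified Lean document; each statement's English description precedes it below -/
import Mathlib

section
/- Let k ∈ ℝ and y ∈ ℝ³, and let Φ(x) = exp(i·k·‖x − y‖)/(4π·‖x − y‖) for x ≠ y. Then Φ satisfies the Sommerfeld radiation condition with rate O(1/‖x‖): there exists a constant C > 0 such that for all x ∈ ℝ³ with ‖x‖ ≥ ‖y‖ + 1 one has ‖x‖ · |(fderiv Φ x)(‖x‖⁻¹ • x) − i·k·Φ(x)| ≤ C/‖x‖. -/
/-!
Away from `y`, `Φ` is the profile `g(s) = e^{iks}/(4πs)` evaluated at `r = ‖x - y‖`, and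
`g' = (ik - 1/s) g`. With `θ` the angle between `x - y` and `x`, the radial derivative is
`cos θ · g'(r)`, so `∂Φ/∂r - ikΦ = g(r) (ik (cos θ - 1) - cos θ / r)`. Since `|g(r)| = 1/(4πr)`,
`r (1 - cos θ) ≤ 2‖y‖` and `r ≥ ‖x‖/(1 + ‖y‖)` once `‖x‖ ≥ ‖y‖ + 1`, this is `O(1/‖x‖²)`.
-/

open Complex Filter InnerProductGeometry Topology
open scoped RealInnerProductSpace

theorem norm_le_one_add_norm_mul_norm_sub {E : Type*} [SeminormedAddCommGroup E] {x y : E}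
    (h : ‖y‖ + 1 ≤ ‖x‖) : ‖x‖ ≤ (1 + ‖y‖) * ‖x - y‖ := by
  have hxy : ‖x‖ ≤ ‖x - y‖ + ‖y‖ := norm_le_norm_sub_add x y
  have h1 : 1 ≤ ‖x - y‖ := by linarith [norm_sub_norm_le x y]
  nlinarith [norm_nonneg y]

section InnerProductSpace

variable {E : Type*} [NormedAddCommGroup E] [InnerProductSpace ℝ E]

theorem hasFDerivAt_norm_of_ne_zero {x : E} (hx : x ≠ 0) :
    HasFDerivAt (‖·‖) (‖x‖⁻¹ • innerSL ℝ x) x := by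
  have h := (hasStrictFDerivAt_norm_sq x).hasFDerivAt.sqrt (by positivity)
  simp only [Real.sqrt_sq (norm_nonneg _)] at h
  convert h using 1
  have : ‖x‖ ≠ 0 := norm_ne_zero_iff.2 hx
  ext v
  simp only [FunLike.coe_smul, Pi.smul_apply, smul_eq_mul, innerSL_apply_apply]
  field_simp
  ring

theorem HasDerivAt.fderiv_comp_norm_sub_apply {F : Type*} [NormedAddCommGroup F]
    [NormedSpace ℝ F] {f : ℝ → F} {f' : F} {Φ : E → F} {x y : E}
    (hf : HasDerivAt f f' ‖x - y‖) (hxy : x ≠ y) (hΦ : Φ =ᶠ[𝓝 x] fun z => f ‖z - y‖)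
    (v : E) : fderiv ℝ Φ x v = (⟪x - y, v⟫ / ‖x - y‖) • f' := by
  have hnorm := (hasFDerivAt_norm_of_ne_zero (sub_ne_zero.2 hxy)).comp x
    ((hasFDerivAt_id x).sub_const y)
  rw [((hf.hasFDerivAt.comp x hnorm).congr_of_eventuallyEq hΦ).fderiv]
  simp [div_eq_inv_mul, mul_smul, inner_sub_left, sub_smul]

theorem inner_inv_norm_smul_div_norm_eq_cos_angle (x y : E) :
    ⟪x, ‖y‖⁻¹ • y⟫ / ‖x‖ = Real.cos (angle x y) := by
  rw [cos_angle, real_inner_smul_right]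
  ring

theorem norm_sub_mul_one_sub_cos_angle_le (x y : E) :
    ‖x - y‖ * (1 - Real.cos (angle (x - y) x)) ≤ 2 * ‖y‖ := by
  have hcos : ‖x - y‖ * Real.cos (angle (x - y) x) = ‖x‖ - ⟪y, x⟫ / ‖x‖ := by
    rcases eq_or_ne x 0 with rfl | hx
    · simp
    rcases eq_or_ne (x - y) 0 with hxy | hxy
    · rw [sub_eq_zero] at hxy; subst hxy
      field_simp
      simp
    rw [cos_angle, inner_sub_left, real_inner_self_eq_norm_sq]
    field_simp
  have h1 : ‖x - y‖ - ‖x‖ ≤ ‖y‖ := by linarith [norm_sub_le x y, norm_neg y]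
  have h2 : ⟪y, x⟫ / ‖x‖ ≤ ‖y‖ := by
    rcases eq_or_ne x 0 with rfl | hx
    · simp
    rw [div_le_iff₀ (norm_pos_iff.2 hx)]
    exact real_inner_le_norm y x
  nlinarith [hcos]

end InnerProductSpace

noncomputable def sphericalWave (k s : ℝ) : ℂ := exp (I * k * s) / (4 * Real.pi * s)

theorem hasDerivAt_sphericalWave (k : ℝ) {s : ℝ} (hs : s ≠ 0) :
    HasDerivAt (sphericalWave k) ((I * k - 1 / s) * sphericalWave k s) s := by
  have hid : HasDerivAt (fun t : ℝ => (t : ℂ)) 1 s := (hasDerivAt_id s).ofReal_comp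
  have hsC : (s : ℂ) ≠ 0 := ofReal_ne_zero.2 hs
  have hs' : (4 * Real.pi * s : ℂ) ≠ 0 := by simp [Real.pi_ne_zero, hs]
  refine (((hid.const_mul (I * k)).cexp).div (hid.const_mul (4 * Real.pi : ℂ)) hs').congr_deriv
    ?_
  rw [sphericalWave]
  field_simp

theorem norm_sphericalWave (k : ℝ) {s : ℝ} (hs : 0 < s) :
    ‖sphericalWave k s‖ = (4 * Real.pi * s)⁻¹ := by
  rw [sphericalWave, norm_div, Complex.norm_exp]
  simp [abs_of_pos hs, abs_of_pos Real.pi_pos]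

theorem norm_smul_deriv_sub_sphericalWave_le (k : ℝ) {s c : ℝ} (hs : 0 < s) (hc : |c| ≤ 1) :
    ‖c • ((I * k - 1 / s) * sphericalWave k s) - I * k * sphericalWave k s‖ ≤
      (|k| * (s * (1 - c)) + 1) / (4 * Real.pi * s ^ 2) := by
  have hsC : (s : ℂ) ≠ 0 := ofReal_ne_zero.2 hs.ne'
  have hfactor : c • ((I * k - 1 / s) * sphericalWave k s) - I * k * sphericalWave k s =
      sphericalWave k s * (I * (k * (c - 1) : ℝ) - (c / s : ℝ)) := by
    rw [Complex.real_smul]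
    push_cast
    field_simp
    ring
  have hc1 : |c - 1| = 1 - c := by
    rw [abs_sub_comm]
    exact abs_of_nonneg (by linarith [le_abs_self c])
  rw [hfactor, norm_mul, norm_sphericalWave k hs]
  calc _ ≤ (4 * Real.pi * s)⁻¹ * (|k| * (1 - c) + 1 / s) := by
        gcongr
        calc ‖I * ((k * (c - 1) : ℝ) : ℂ) - ((c / s : ℝ) : ℂ)‖
            ≤ ‖I * ((k * (c - 1) : ℝ) : ℂ)‖ + ‖((c / s : ℝ) : ℂ)‖ := norm_sub_le _ _
          _ = |k| * (1 - c) + |c| / s := by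
            rw [norm_mul, norm_I, one_mul, norm_real, norm_real, Real.norm_eq_abs,
              Real.norm_eq_abs, abs_mul, hc1, abs_div, abs_of_pos hs]
          _ ≤ |k| * (1 - c) + 1 / s := by gcongr
    _ = _ := by field_simp

/-- The fundamental solution `Φ(x) = exp(i k ‖x-y‖)/(4π ‖x-y‖)` satisfies the Sommerfeld
radiation condition with rate `O(1/‖x‖)`: there is `C > 0` such that for all `x` with
`‖x‖ ≥ ‖y‖ + 1` one has `‖x‖ · |∂Φ/∂r − i k Φ| ≤ C/‖x‖`, where `∂Φ/∂r` is the Fréchet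
derivative of `Φ` at `x` in the radial direction `‖x‖⁻¹ • x`. -/
theorem fundamental_solution_radiation_condition (k : ℝ) (y : EuclideanSpace ℝ (Fin 3))
    (Φ : EuclideanSpace ℝ (Fin 3) → ℂ)
    (hΦ : ∀ x, x ≠ y →
      Φ x = Complex.exp (Complex.I * k * ‖x - y‖) / (4 * Real.pi * ‖x - y‖)) :
    ∃ C : ℝ, 0 < C ∧ ∀ x : EuclideanSpace ℝ (Fin 3), ‖y‖ + 1 ≤ ‖x‖ →
      ‖x‖ * ‖fderiv ℝ Φ x ((‖x‖)⁻¹ • x) - Complex.I * k * Φ x‖ ≤ C / ‖x‖ := by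
  set A := 2 * |k| * ‖y‖ + 1
  refine ⟨(1 + ‖y‖) ^ 2 * A / (4 * Real.pi), by positivity, fun x hx => ?_⟩
  have hxy : x ≠ y := by rintro rfl; linarith
  have hr : 0 < ‖x - y‖ := norm_pos_iff.2 (sub_ne_zero.2 hxy)
  have hx0 : 0 < ‖x‖ := by linarith [norm_nonneg y]
  have hΦx : Φ =ᶠ[𝓝 x] fun z => sphericalWave k ‖z - y‖ :=
    eventually_ne_nhds hxy |>.mono hΦ
  rw [(hasDerivAt_sphericalWave k hr.ne').fderiv_comp_norm_sub_apply hxy hΦx,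
    inner_inv_norm_smul_div_norm_eq_cos_angle, hΦx.self_of_nhds]
  have hwave :=
    norm_smul_deriv_sub_sphericalWave_le k hr (Real.abs_cos_le_one (angle (x - y) x))
  have hangle := norm_sub_mul_one_sub_cos_angle_le x y
  have hxr := norm_le_one_add_norm_mul_norm_sub hx
  calc _ ≤ ‖x‖ * (A / (4 * Real.pi * ‖x - y‖ ^ 2)) := by
        gcongr
        refine hwave.trans (div_le_div_of_nonneg_right ?_ (by positivity))
        linarith [mul_le_mul_of_nonneg_left hangle (abs_nonneg k)]
    _ ≤ _ := by
        rw [div_div, mul_div_assoc', div_le_div_iff₀ (by positivity) (by positivity)]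
        calc ‖x‖ * A * (4 * Real.pi * ‖x‖) = ‖x‖ ^ 2 * (4 * Real.pi * A) := by ring
          _ ≤ ((1 + ‖y‖) * ‖x - y‖) ^ 2 * (4 * Real.pi * A) := by gcongr
          _ = _ := by ring
end

section
/- Let K ⊆ ℝ³ be a compact set for which there exists a constant C₀ > 0 such that μH²(K ∩ closedBall(x, r)) ≤ C₀·r² for all x ∈ ℝ³ and all r > 0, and let φ : ℝ³ → ℂ be a bounded measurable function. Define w(x) = ∫_{y ∈ K} φ(y)/(4π·‖x − y‖) dμH²(y). Then for every x ∈ ℝ³ the integrand is integrable (so w is well defined on all of ℝ³, including on K), w is continuous on all of ℝ³, and w(x) → 0 as ‖x‖ → ∞. -/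
/-!
The growth bound `μ (closedBall x r) ≤ C r²` controls the singularity of the kernel `1 / ‖x - y‖`
uniformly in `x`: by the layer-cake formula, `∫_{B(x, r)} ‖x - y‖⁻¹ dμ(y) ≤ 2 C r`. Hence the
kernel is integrable, and truncating it to `(max ‖x - y‖ r)⁻¹`, which is bounded and continuous in
`x`, changes the potential by at most `3 C M r` uniformly in `x` (`M` bounding the density). The
potential is therefore a uniform limit of continuous functions. Its decay at infinity is dominated
convergence, the measure `μH²|_K` being finite with bounded support.
-/

open Complex MeasureTheory Metric Filter Bornology
open scoped ENNReal

open Set Topology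

theorem lintegral_Ioi_inv_sq {a : ℝ} (ha : 0 < a) :
    ∫⁻ t in Ioi a, ENNReal.ofReal (t⁻¹ ^ 2) = ENNReal.ofReal a⁻¹ := by
  have hpow : EqOn (fun t : ℝ => t ^ (-2 : ℝ)) (fun t => t⁻¹ ^ 2) (Ioi a) := fun t ht => by
    simp [Real.rpow_neg (ha.trans ht).le]
  have hint : IntegrableOn (fun t : ℝ => t⁻¹ ^ 2) (Ioi a) :=
    (integrableOn_Ioi_rpow_of_lt (by norm_num) ha).congr_fun hpow measurableSet_Ioi
  rw [← ofReal_integral_eq_lintegral_ofReal hint (ae_of_all _ fun t => by positivity),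
    ← setIntegral_congr_fun measurableSet_Ioi hpow, integral_Ioi_rpow_of_lt (by norm_num) ha]
  norm_num [Real.rpow_neg_one]

variable {X E : Type*} [PseudoMetricSpace X] [MeasurableSpace X]
  [NormedAddCommGroup E] [NormedSpace ℝ E]

/-- Upper Ahlfors regularity of dimension `2`. -/
def HasQuadraticGrowth (μ : Measure X) (C : ℝ) : Prop :=
  ∀ x r, 0 < r → μ (closedBall x r) ≤ ENNReal.ofReal (C * r ^ 2)

noncomputable def invDistPotential (μ : Measure X) (f : X → E) (x : X) : E :=
  ∫ y, (dist x y)⁻¹ • f y ∂μ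

section Truncation

variable {μ : Measure X} {M r : ℝ} {f : X → E}

theorem norm_inv_max_smul_le {d : ℝ} (hr : 0 < r) {v : E} (hv : ‖v‖ ≤ M) :
    ‖(max d r)⁻¹ • v‖ ≤ r⁻¹ * M := by
  have hdr : 0 < max d r := hr.trans_le (le_max_right d r)
  rw [norm_smul, Real.norm_of_nonneg (inv_nonneg.2 hdr.le)]
  exact mul_le_mul (inv_anti₀ hr (le_max_right d r)) hv (norm_nonneg v) (inv_nonneg.2 hr.le)

theorem continuous_integral_inv_max_dist_smul [OpensMeasurableSpace X] [IsFiniteMeasure μ]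
    (hf : AEStronglyMeasurable f μ) (hM : ∀ᵐ y ∂μ, ‖f y‖ ≤ M) (hr : 0 < r) :
    Continuous fun x => ∫ y, (max (dist x y) r)⁻¹ • f y ∂μ :=
  continuous_of_dominated (fun _ => (by fun_prop : Measurable _).aestronglyMeasurable.smul hf)
    (fun _ => hM.mono fun _ hy => norm_inv_max_smul_le hr hy) (integrable_const _)
    (ae_of_all _ fun _ => (by
      fun_prop (disch := exact fun _ => (hr.trans_le (le_max_right _ _)).ne') :
        Continuous fun x => (max (dist x _) r)⁻¹).smul continuous_const)

end Truncation

namespace HasQuadraticGrowth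

variable {μ : Measure X} {C M r : ℝ} {f : X → E}

theorem measure_inv_dist_gt_le (hμ : HasQuadraticGrowth μ C) (x : X) {t : ℝ} (ht : 0 < t) :
    μ {y | t < (dist x y)⁻¹} ≤ ENNReal.ofReal (C * t⁻¹ ^ 2) := by
  refine (measure_mono fun y hy => ?_).trans (hμ x t⁻¹ (inv_pos.2 ht))
  have hd : 0 < dist x y := inv_pos.1 (ht.trans hy)
  rw [mem_closedBall, dist_comm]
  exact (le_inv_comm₀ ht hd).1 hy.le

theorem isFiniteMeasure (hμ : HasQuadraticGrowth μ C) {c : X} {R : ℝ}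
    (hsupp : ∀ᵐ y ∂μ, y ∈ closedBall c R) : IsFiniteMeasure μ := by
  have hsub : ∀ᵐ y ∂μ, y ∈ closedBall c (max R 1) :=
    hsupp.mono fun y hy => closedBall_subset_closedBall (le_max_left R 1) hy
  exact ⟨(measure_mono_ae (hsub.mono fun y hy _ => hy)).trans_lt
    ((hμ c _ (by positivity)).trans_lt ENNReal.ofReal_lt_top)⟩

variable [OpensMeasurableSpace X]

theorem lintegral_closedBall_inv_dist_le (hμ : HasQuadraticGrowth μ C) (hC : 0 ≤ C) (x : X)
    (hr : 0 < r) :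
    ∫⁻ y in closedBall x r, ENNReal.ofReal (dist x y)⁻¹ ∂μ ≤ ENNReal.ofReal (2 * C * r) := by
  rw [lintegral_eq_lintegral_meas_lt _ (ae_of_all _ fun y => inv_nonneg.2 dist_nonneg)
      (by fun_prop), ← Ioc_union_Ioi_eq_Ioi (inv_pos.2 hr).le,
    lintegral_union measurableSet_Ioi (Ioc_disjoint_Ioi le_rfl)]
  -- low levels `t ≤ r⁻¹`: bound by the whole ball; high levels `t`: by the ball of radius `t⁻¹`
  have hlow : ∫⁻ t in Ioc 0 r⁻¹, μ.restrict (closedBall x r) {y | t < (dist x y)⁻¹}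
      ≤ ENNReal.ofReal (C * r) := calc
    _ ≤ ∫⁻ _ in Ioc 0 r⁻¹, ENNReal.ofReal (C * r ^ 2) :=
        lintegral_mono fun t => (measure_mono (subset_univ _)).trans <| by
          simpa using hμ x r hr
    _ = ENNReal.ofReal (C * r) := by
        rw [setLIntegral_const, Real.volume_Ioc, sub_zero, ← ENNReal.ofReal_mul (by positivity)]
        congr 1
        field_simp
  have hhigh : ∫⁻ t in Ioi r⁻¹, μ.restrict (closedBall x r) {y | t < (dist x y)⁻¹}
      ≤ ENNReal.ofReal (C * r) := calc
    _ ≤ ∫⁻ t in Ioi r⁻¹, ENNReal.ofReal C * ENNReal.ofReal (t⁻¹ ^ 2) := by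
        refine setLIntegral_mono' measurableSet_Ioi fun t ht => ?_
        rw [← ENNReal.ofReal_mul hC]
        exact (Measure.restrict_le_self _).trans
          (hμ.measure_inv_dist_gt_le x ((inv_pos.2 hr).trans ht))
    _ = ENNReal.ofReal (C * r) := by
        rw [lintegral_const_mul _ (by fun_prop), lintegral_Ioi_inv_sq (inv_pos.2 hr), inv_inv,
          ← ENNReal.ofReal_mul hC]
  calc _ ≤ ENNReal.ofReal (C * r) + ENNReal.ofReal (C * r) := add_le_add hlow hhigh
    _ = ENNReal.ofReal (2 * C * r) := by
        rw [← ENNReal.ofReal_add (by positivity) (by positivity)]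
        ring_nf

theorem integrable_inv_dist [IsFiniteMeasure μ] (hμ : HasQuadraticGrowth μ C) (hC : 0 ≤ C)
    (x : X) : Integrable (fun y => (dist x y)⁻¹) μ := by
  refine ⟨(by fun_prop : Measurable _).aestronglyMeasurable, ?_⟩
  rw [hasFiniteIntegral_iff_ofReal (ae_of_all _ fun y => inv_nonneg.2 dist_nonneg)]
  have hsplit : ∀ y, ENNReal.ofReal (dist x y)⁻¹ ≤
      1 + (closedBall x 1).indicator (fun y => ENNReal.ofReal (dist x y)⁻¹) y := by
    intro y
    by_cases hy : y ∈ closedBall x 1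
    · simp [indicator_of_mem hy]
    · rw [mem_closedBall, dist_comm, not_le] at hy
      simpa [indicator_of_notMem, mem_closedBall, dist_comm, hy.not_ge] using
        (inv_lt_one_of_one_lt₀ hy).le
  calc _ ≤ ∫⁻ y, 1 + (closedBall x 1).indicator (fun y => ENNReal.ofReal (dist x y)⁻¹) y ∂μ :=
        lintegral_mono hsplit
    _ = μ univ + ∫⁻ y in closedBall x 1, ENNReal.ofReal (dist x y)⁻¹ ∂μ := by
        rw [lintegral_add_left measurable_const, lintegral_const, one_mul,
          lintegral_indicator measurableSet_closedBall]
    _ < ⊤ := ENNReal.add_lt_top.2 ⟨measure_lt_top _ _,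
        (hμ.lintegral_closedBall_inv_dist_le hC x one_pos).trans_lt ENNReal.ofReal_lt_top⟩

theorem lintegral_inv_dist_sub_inv_max_le (hμ : HasQuadraticGrowth μ C) (hC : 0 ≤ C) (x : X)
    (hr : 0 < r) :
    ∫⁻ y, ENNReal.ofReal |(dist x y)⁻¹ - (max (dist x y) r)⁻¹| ∂μ ≤ ENNReal.ofReal (3 * C * r) := by
  have hpt : ∀ y, ENNReal.ofReal |(dist x y)⁻¹ - (max (dist x y) r)⁻¹| ≤ (closedBall x r).indicator
      (fun y => ENNReal.ofReal (dist x y)⁻¹ + ENNReal.ofReal r⁻¹) y := by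
    intro y
    by_cases hy : y ∈ closedBall x r
    · rw [indicator_of_mem hy, max_eq_right (by rwa [mem_closedBall, dist_comm] at hy),
        ← ENNReal.ofReal_add (inv_nonneg.2 dist_nonneg) (inv_nonneg.2 hr.le)]
      refine ENNReal.ofReal_le_ofReal ((abs_sub _ _).trans_eq ?_)
      rw [abs_of_nonneg (inv_nonneg.2 dist_nonneg), abs_of_nonneg (inv_nonneg.2 hr.le)]
    · rw [mem_closedBall, dist_comm, not_le] at hy
      simp [max_eq_left hy.le]
  calc _ ≤ ∫⁻ y in closedBall x r, ENNReal.ofReal (dist x y)⁻¹ + ENNReal.ofReal r⁻¹ ∂μ := by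
        rw [← lintegral_indicator measurableSet_closedBall]
        exact lintegral_mono hpt
    _ = (∫⁻ y in closedBall x r, ENNReal.ofReal (dist x y)⁻¹ ∂μ) +
          ENNReal.ofReal r⁻¹ * μ (closedBall x r) := by
        rw [lintegral_add_right _ measurable_const, setLIntegral_const, mul_comm]
    _ ≤ ENNReal.ofReal (2 * C * r) + ENNReal.ofReal r⁻¹ * ENNReal.ofReal (C * r ^ 2) := by
        gcongr
        · exact hμ.lintegral_closedBall_inv_dist_le hC x hr
        · exact hμ x r hr
    _ = ENNReal.ofReal (3 * C * r) := by
        rw [← ENNReal.ofReal_mul (inv_nonneg.2 hr.le), ← ENNReal.ofReal_add (by positivity)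
          (by positivity)]
        congr 1
        field_simp
        ring

theorem norm_invDistPotential_sub_integral_inv_max_le [IsFiniteMeasure μ]
    (hμ : HasQuadraticGrowth μ C) (hC : 0 ≤ C) (hf : AEStronglyMeasurable f μ)
    (hM : ∀ᵐ y ∂μ, ‖f y‖ ≤ M) (hM0 : 0 ≤ M) (x : X) (hr : 0 < r) :
    ‖invDistPotential μ f x - ∫ y, (max (dist x y) r)⁻¹ • f y ∂μ‖ ≤ M * (3 * C * r) := by
  have hint : Integrable (fun y => (dist x y)⁻¹ • f y) μ :=
    (hμ.integrable_inv_dist hC x).smul_bdd M hf hM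
  have hint_max : Integrable (fun y => (max (dist x y) r)⁻¹ • f y) μ :=
    .of_bound ((by fun_prop : Measurable _).aestronglyMeasurable.smul hf) (r⁻¹ * M)
      (hM.mono fun y hy => norm_inv_max_smul_le hr hy)
  have hpt : ∀ᵐ y ∂μ, ENNReal.ofReal ‖(dist x y)⁻¹ • f y - (max (dist x y) r)⁻¹ • f y‖ ≤
      ENNReal.ofReal M * ENNReal.ofReal |(dist x y)⁻¹ - (max (dist x y) r)⁻¹| := by
    filter_upwards [hM] with y hy
    rw [← ENNReal.ofReal_mul hM0, ← sub_smul, norm_smul, Real.norm_eq_abs, mul_comm M]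
    gcongr
  rw [invDistPotential, ← integral_sub hint hint_max]
  refine (norm_integral_le_lintegral_norm _).trans
    (ENNReal.toReal_le_of_le_ofReal (by positivity) ?_)
  calc _ ≤ ∫⁻ y, ENNReal.ofReal M * ENNReal.ofReal |(dist x y)⁻¹ - (max (dist x y) r)⁻¹| ∂μ :=
        lintegral_mono_ae hpt
    _ ≤ ENNReal.ofReal M * ENNReal.ofReal (3 * C * r) := by
        rw [lintegral_const_mul' _ _ ENNReal.ofReal_ne_top]
        gcongr
        exact hμ.lintegral_inv_dist_sub_inv_max_le hC x hr
    _ = ENNReal.ofReal (M * (3 * C * r)) := (ENNReal.ofReal_mul hM0).symm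

theorem continuous_invDistPotential [IsFiniteMeasure μ] (hμ : HasQuadraticGrowth μ C)
    (hC : 0 ≤ C) (hf : AEStronglyMeasurable f μ) (hM : ∀ᵐ y ∂μ, ‖f y‖ ≤ M) :
    Continuous (invDistPotential μ f) := by
  have hM' : ∀ᵐ y ∂μ, ‖f y‖ ≤ max M 0 := hM.mono fun y hy => hy.trans (le_max_left M 0)
  have hunif : TendstoUniformly (fun r x => ∫ y, (max (dist x y) r)⁻¹ • f y ∂μ)
      (invDistPotential μ f) (𝓝[>] 0) := by
    rw [Metric.tendstoUniformly_iff]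
    intro ε hε
    have hsmall : Tendsto (fun r => max M 0 * (3 * C * r)) (𝓝[>] 0) (𝓝 0) := by
      simpa using ((by fun_prop : Continuous fun r : ℝ => max M 0 * (3 * C * r)).tendsto 0)
        |>.mono_left nhdsWithin_le_nhds
    filter_upwards [hsmall.eventually (gt_mem_nhds hε), self_mem_nhdsWithin] with r hrε hr x
    rw [dist_eq_norm]
    exact (hμ.norm_invDistPotential_sub_integral_inv_max_le hC hf hM' (le_max_right M 0) x hr)
      |>.trans_lt hrε
  exact hunif.continuous (eventually_mem_nhdsWithin.mono fun r (hr : r ∈ Ioi 0) =>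
    continuous_integral_inv_max_dist_smul hf hM' hr).frequently

end HasQuadraticGrowth

theorem tendsto_invDistPotential_cobounded [OpensMeasurableSpace X] {μ : Measure X}
    [IsFiniteMeasure μ] {f : X → E} {M R : ℝ} {c : X} (hsupp : ∀ᵐ y ∂μ, y ∈ closedBall c R)
    (hf : AEStronglyMeasurable f μ) (hM : ∀ᵐ y ∂μ, ‖f y‖ ≤ M) :
    Tendsto (invDistPotential μ f) (cobounded X) (𝓝 0) := by
  have : (cobounded X).IsCountablyGenerated := by
    rw [← comap_dist_right_atTop c]
    infer_instance
  have hfar : ∀ᶠ x in cobounded X, R + 1 ≤ dist x c :=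
    (tendsto_dist_right_cobounded_atTop c).eventually_ge_atTop _
  have hbound : ∀ᶠ x in cobounded X, ∀ᵐ y ∂μ, ‖(dist x y)⁻¹ • f y‖ ≤ M := by
    filter_upwards [hfar] with x hx
    filter_upwards [hsupp, hM] with y hy hfy
    have hxy : 1 ≤ dist x y := by
      have := dist_triangle x y c
      rw [mem_closedBall] at hy
      linarith
    rw [norm_smul, Real.norm_of_nonneg (inv_nonneg.2 dist_nonneg)]
    exact (mul_le_of_le_one_left (norm_nonneg _) (inv_le_one_of_one_le₀ hxy)).trans hfy
  have hlim := tendsto_integral_filter_of_dominated_convergence (fun _ => M)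
    (.of_forall fun x => (by fun_prop : Measurable _).aestronglyMeasurable.smul hf) hbound
    (integrable_const M)
    (ae_of_all _ fun y =>
      (tendsto_dist_right_cobounded_atTop y).inv_tendsto_atTop.smul_const (f y))
  rwa [funext fun y => zero_smul ℝ (f y), integral_zero] at hlim

theorem div_four_pi_mul_norm_eq_smul {F : Type*} [SeminormedAddCommGroup F] (z : ℂ) (x y : F) :
    z / (4 * Real.pi * ‖x - y‖) = (4 * Real.pi)⁻¹ • ((dist x y)⁻¹ • z) := by
  rw [dist_eq_norm, Complex.real_smul, Complex.real_smul, div_eq_mul_inv]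
  push_cast
  ring

/-- A Laplace single-layer potential with bounded measurable density on a compact set `K`
satisfying the upper Ahlfors regularity condition `μH²(K ∩ B̄(x,r)) ≤ C₀ r²` is well defined
everywhere (including on `K`), continuous on all of `ℝ³`, and vanishes at infinity. -/
theorem laplace_single_layer_potential_continuous (K : Set (EuclideanSpace ℝ (Fin 3)))
    (hK : IsCompact K) (C₀ : ℝ) (hC₀ : 0 < C₀)
    (hreg : ∀ (x : EuclideanSpace ℝ (Fin 3)) (r : ℝ), 0 < r →
      μH[2] (K ∩ closedBall x r) ≤ ENNReal.ofReal (C₀ * r ^ 2))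
    (φ : EuclideanSpace ℝ (Fin 3) → ℂ) (hφm : Measurable φ)
    (hφb : ∃ M : ℝ, ∀ y, ‖φ y‖ ≤ M)
    (w : EuclideanSpace ℝ (Fin 3) → ℂ)
    (hw : ∀ x, w x = ∫ y in K, φ y / (4 * Real.pi * ‖x - y‖) ∂(μH[2])) :
    (∀ x : EuclideanSpace ℝ (Fin 3),
        IntegrableOn (fun y => φ y / (4 * Real.pi * ‖x - y‖)) K μH[2]) ∧
      Continuous w ∧
      Tendsto w (cobounded (EuclideanSpace ℝ (Fin 3))) (nhds 0) := by
  obtain ⟨M, hM⟩ := hφb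
  obtain ⟨R, hKR⟩ := hK.isBounded.subset_closedBall 0
  set μ := μH[2].restrict K
  have hgrowth : HasQuadraticGrowth μ C₀ := fun x r hr => by
    rw [Measure.restrict_apply measurableSet_closedBall, inter_comm]
    exact hreg x r hr
  have hsupp : ∀ᵐ y ∂μ, y ∈ closedBall 0 R :=
    (ae_restrict_mem hK.measurableSet).mono fun y hy => hKR hy
  have := hgrowth.isFiniteMeasure hsupp
  have hf : AEStronglyMeasurable φ μ := hφm.aestronglyMeasurable
  have hfM : ∀ᵐ y ∂μ, ‖φ y‖ ≤ M := ae_of_all _ hM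
  have hw' : w = (4 * Real.pi)⁻¹ • invDistPotential μ φ := funext fun x => by
    simp only [hw, div_four_pi_mul_norm_eq_smul, integral_smul, invDistPotential, μ,
      Pi.smul_apply]
  refine ⟨fun x => ?_, ?_, ?_⟩
  · simp only [div_four_pi_mul_norm_eq_smul]
    exact ((hgrowth.integrable_inv_dist hC₀.le x).smul_bdd M hf hfM).smul (4 * Real.pi)⁻¹
  · rw [hw']
    exact (hgrowth.continuous_invDistPotential hC₀.le hf hfM).const_smul _
  · rw [hw', ← smul_zero (4 * Real.pi)⁻¹]
    exact (tendsto_invDistPotential_cobounded hsupp hf hfM).const_smul _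
end
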